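/- arXiv:1309.4403 — 6 statements merged into one kernel-verified Lean document; each statement's English description precedes it below -/
import Mathlib

section
/- Conversely, if a multiplicative norm on a field satisfies |n·1| ≤ 1 for all natural numbers n, then it satisfies the ultrametric inequality |x + y| ≤ max(|x|, |y|). -/
/-!
Expanding `(x + y) ^ m` by the binomial theorem and bounding each binomial coefficient by `1`
gives `|x + y| ^ m ≤ (m + 1) * max |x| |y| ^ m`; taking `m`-th roots and letting `m → ∞` yields
the ultrametric inequality. This argument is `isUltrametricDist_of_forall_norm_natCast_le_one`,
applied to the normed field `WithAbs` of `v` viewed as an absolute value.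
-/

open NNReal

def AbsoluteValue.ofNNReal {R : Type*} [Semiring R] (v : R → ℝ≥0)
    (h0 : ∀ x, v x = 0 ↔ x = 0) (hmul : ∀ x y, v (x * y) = v x * v y)
    (htri : ∀ x y, v (x + y) ≤ v x + v y) : AbsoluteValue R ℝ where
  toFun x := v x
  map_mul' x y := by rw [hmul, NNReal.coe_mul]
  nonneg' x := (v x).coe_nonneg
  eq_zero' x := by rw [NNReal.coe_eq_zero, h0]
  add_le' x y := by exact_mod_cast htri x y

theorem AbsoluteValue.add_le_max_of_forall_natCast_le_one {K : Type*} [Field K]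
    (v : AbsoluteValue K ℝ) (h : ∀ n : ℕ, v n ≤ 1) (x y : K) :
    v (x + y) ≤ max (v x) (v y) := by
  have : IsUltrametricDist (WithAbs v) :=
    IsUltrametricDist.isUltrametricDist_of_forall_norm_natCast_le_one h
  exact IsUltrametricDist.norm_add_le_max (WithAbs.toAbs v x) (WithAbs.toAbs v y)

theorem stmt5 {K : Type*} [Field K] (v : K → NNReal)
    (h0 : ∀ x : K, v x = 0 ↔ x = 0)
    (hmul : ∀ x y : K, v (x * y) = v x * v y)
    (htri : ∀ x y : K, v (x + y) ≤ v x + v y)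
    (hint : ∀ n : ℕ, v ((n : K) * 1) ≤ 1) :
    ∀ x y : K, v (x + y) ≤ max (v x) (v y) := by
  intro x y
  have hnat (n : ℕ) : AbsoluteValue.ofNNReal v h0 hmul htri n ≤ 1 := by
    change (v n : ℝ) ≤ 1
    exact_mod_cast (mul_one (n : K)) ▸ hint n
  exact_mod_cast (AbsoluteValue.ofNNReal v h0 hmul htri).add_le_max_of_forall_natCast_le_one
    hnat x y
end

section
/- Any multiplicative seminorm on a K-algebra A extending the norm on a nonarchimedean field K satisfies the ultrametric inequality: |f + g| ≤ max(|f|, |g|) for all f, g ∈ A. -/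
/-!
Since `0` and `1` are idempotent, multiplicativity gives `|0|, |1| ≤ 1`, and ultrametricity on `K`
then gives `|n| ≤ 1` for every natural number `n`. Expanding `(f + g) ^ m` by the binomial
theorem therefore bounds `|f + g| ^ m` by `(m + 1) * max |f| |g| ^ m`,
and since `(m + 1) ^ (1 / m) → 1` this forces `|f + g| ≤ max |f| |g|`.
-/

open NNReal

lemma NNReal.le_one_of_mul_self_eq {x : ℝ≥0} (h : x * x = x) : x ≤ 1 := by
  rcases eq_or_ne x 0 with rfl | hx
  · exact zero_le_one
  · exact (mul_right_cancel₀ hx (h.trans (one_mul x).symm)).le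

lemma NNReal.le_of_forall_pow_le_succ_mul_pow {a b : ℝ≥0}
    (h : ∀ m : ℕ, a ^ m ≤ (m + 1) * b ^ m) : a ≤ b := by
  refine le_of_forall_gt_imp_ge_of_dense fun c hbc ↦ ?_
  obtain ⟨m, hm⟩ : ∃ m : ℕ, (m + 1) * b ^ m < c ^ m := by
    rcases eq_zero_or_pos b with rfl | hb
    · exact ⟨1, by simpa using hbc⟩
    obtain ⟨m, hm⟩ := Real.exists_natCast_add_one_lt_pow_of_one_lt (a := c / b)
      (by exact_mod_cast (one_lt_div hb).2 hbc)
    refine ⟨m, ?_⟩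
    rw [← lt_div_iff₀ (pow_pos hb m), ← div_pow]
    exact_mod_cast hm
  exact (lt_of_pow_lt_pow_left₀ m zero_le ((h m).trans_lt hm)).le

section
variable {A : Type*} {v : A → ℝ≥0}

lemma apply_le_one_of_isIdempotentElem [Mul A] (hmul : ∀ f g : A, v (f * g) = v f * v g)
    {e : A} (he : IsIdempotentElem e) : v e ≤ 1 :=
  NNReal.le_one_of_mul_self_eq (by rw [← hmul, he.eq])

lemma apply_pow_succ [Monoid A] (hmul : ∀ f g : A, v (f * g) = v f * v g) (x : A) (n : ℕ) :
    v (x ^ (n + 1)) = v x ^ (n + 1) := by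
  induction n with
  | zero => simp only [zero_add, pow_one]
  | succ n ih => rw [pow_succ, hmul, ih, ← pow_succ]

lemma apply_pow_le [Monoid A] (hmul : ∀ f g : A, v (f * g) = v f * v g) (x : A) (n : ℕ) :
    v (x ^ n) ≤ v x ^ n := by
  rcases n with _ | n
  · simpa using apply_le_one_of_isIdempotentElem hmul IsIdempotentElem.one
  · exact (apply_pow_succ hmul x n).le

lemma apply_natCast_le_one {K : Type*} [CommSemiring K] [Semiring A] [Algebra K A]
    (hmul : ∀ f g : A, v (f * g) = v f * v g) (hK : IsNonarchimedean (v ∘ algebraMap K A))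
    (n : ℕ) : v n ≤ 1 := by
  induction n with
  | zero => exact_mod_cast apply_le_one_of_isIdempotentElem hmul IsIdempotentElem.zero
  | succ n ih =>
    have h := hK n 1
    simp only [Function.comp_apply, map_natCast, map_one, ← Nat.cast_succ] at h
    exact h.trans (max_le ih (apply_le_one_of_isIdempotentElem hmul IsIdempotentElem.one))

lemma apply_add_pow_le [CommSemiring A] (hmul : ∀ f g : A, v (f * g) = v f * v g)
    (htri : ∀ f g : A, v (f + g) ≤ v f + v g) (hnat : ∀ n : ℕ, v n ≤ 1) (f g : A) (m : ℕ) :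
    v (f + g) ^ m ≤ (m + 1) * max (v f) (v g) ^ m := by
  set M := max (v f) (v g)
  rcases m with _ | m
  · simp
  have hterm : ∀ k ∈ Finset.range (m + 1 + 1),
      v (f ^ k * g ^ (m + 1 - k) * (m + 1).choose k) ≤ M ^ (m + 1) := by
    intro k hk
    calc v (f ^ k * g ^ (m + 1 - k) * (m + 1).choose k)
        ≤ M ^ k * M ^ (m + 1 - k) * 1 := by
          rw [hmul, hmul]
          gcongr
          · exact (apply_pow_le hmul f k).trans (pow_le_pow_left₀ zero_le (le_max_left _ _) k)
          · exact (apply_pow_le hmul g _).trans (pow_le_pow_left₀ zero_le (le_max_right _ _) _)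
          · exact hnat _
      _ = M ^ (m + 1) := by
          rw [mul_one, ← pow_add, Nat.add_sub_cancel' (Finset.mem_range_succ_iff.1 hk)]
  calc v (f + g) ^ (m + 1) = v ((f + g) ^ (m + 1)) := (apply_pow_succ hmul _ m).symm
    _ ≤ ∑ k ∈ Finset.range (m + 1 + 1), v (f ^ k * g ^ (m + 1 - k) * (m + 1).choose k) := by
      rw [add_pow]
      exact Finset.le_sum_nonempty_of_subadditive v htri Finset.nonempty_range_add_one _
    _ ≤ ∑ _k ∈ Finset.range (m + 1 + 1), M ^ (m + 1) := Finset.sum_le_sum hterm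
    _ = (↑(m + 1) + 1) * M ^ (m + 1) := by simp

theorem isNonarchimedean_of_apply_natCast_le_one [CommSemiring A]
    (hmul : ∀ f g : A, v (f * g) = v f * v g)
    (htri : ∀ f g : A, v (f + g) ≤ v f + v g) (hnat : ∀ n : ℕ, v n ≤ 1) :
    IsNonarchimedean v := fun f g ↦
  NNReal.le_of_forall_pow_le_succ_mul_pow (apply_add_pow_le hmul htri hnat f g)

end

theorem stmt9_general {K A : Type*} [Field K] [CommRing A] [Algebra K A]
    (vK : K → NNReal)
    (hKultra : ∀ x y : K, vK (x + y) ≤ max (vK x) (vK y))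
    (v : A → NNReal)
    (hmul : ∀ f g : A, v (f * g) = v f * v g)
    (htri : ∀ f g : A, v (f + g) ≤ v f + v g)
    (hext : ∀ c : K, v (algebraMap K A c) = vK c) :
    ∀ f g : A, v (f + g) ≤ max (v f) (v g) := by
  have hK : IsNonarchimedean (v ∘ algebraMap K A) := fun x y ↦ by
    simpa only [Function.comp_apply, hext] using hKultra x y
  exact isNonarchimedean_of_apply_natCast_le_one hmul htri (apply_natCast_le_one hmul hK)

theorem stmt9 {K A : Type*} [Field K] [CommRing A] [Algebra K A]
    (vK : K → NNReal)
    (hK0 : ∀ x : K, vK x = 0 ↔ x = 0)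
    (hKmul : ∀ x y : K, vK (x * y) = vK x * vK y)
    (hKultra : ∀ x y : K, vK (x + y) ≤ max (vK x) (vK y))
    (v : A → NNReal)
    (hmul : ∀ f g : A, v (f * g) = v f * v g)
    (htri : ∀ f g : A, v (f + g) ≤ v f + v g)
    (hext : ∀ c : K, v (algebraMap K A c) = vK c) :
    ∀ f g : A, v (f + g) ≤ max (v f) (v g) :=
  stmt9_general vK hKultra v hmul htri hext
end

section
/- A multiplicative seminorm on a commutative ring A with kernel the prime ideal 𝔭 factors uniquely through a multiplicative norm on the residue field κ(𝔭) = Frac(A/𝔭). -/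
/-!
Since `v` is subadditive and vanishes exactly on `𝔭`, it is constant on cosets of `𝔭`, so it
descends to an absolute value on the domain `A/𝔭`. A multiplicative map from a domain to a
semifield that is nonzero off `0` extends uniquely to a multiplicative map on the fraction field,
namely `a / b ↦ |a| / |b|`; subadditivity survives because `|a d + b c| ≤ |a| |d| + |b| |c|`.
Any multiplicative `w` pulling back to `v` agrees with it on numerators and denominators, whence
uniqueness.
-/

open scoped nonZeroDivisors NNReal

namespace AbsoluteValue

section Quotient

variable {R : Type*} [CommRing R] {v : R → ℝ≥0} {P : Ideal R}

theorem apply_eq_of_sub_mem (htri : ∀ f g : R, v (f + g) ≤ v f + v g)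
    (hP : ∀ f ∈ P, v f = 0) {a b : R} (hab : a - b ∈ P) : v a = v b := by
  have hba : b - a ∈ P := by simpa using P.neg_mem hab
  apply le_antisymm
  · calc v a = v (b + (a - b)) := by rw [add_sub_cancel]
      _ ≤ v b := by simpa [hP _ hab] using htri b (a - b)
  · calc v b = v (a + (b - a)) := by rw [add_sub_cancel]
      _ ≤ v a := by simpa [hP _ hba] using htri a (b - a)

variable (v P)

noncomputable def liftQuotient (hmul : ∀ f g : R, v (f * g) = v f * v g)
    (htri : ∀ f g : R, v (f + g) ≤ v f + v g) (hker : ∀ f : R, f ∈ P ↔ v f = 0) :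
    AbsoluteValue (R ⧸ P) ℝ≥0 where
  toFun := Quotient.lift v fun _ _ hab ↦
    apply_eq_of_sub_mem htri (fun f ↦ (hker f).1) (Submodule.quotientRel_def P |>.1 hab)
  map_mul' := by
    rintro ⟨f⟩ ⟨g⟩
    exact hmul f g
  nonneg' _ := zero_le
  eq_zero' := by
    rintro ⟨f⟩
    exact (hker f).symm.trans (Ideal.Quotient.eq_zero_iff_mem).symm
  add_le' := by
    rintro ⟨f⟩ ⟨g⟩
    exact htri f g

theorem liftQuotient_mk (hmul : ∀ f g : R, v (f * g) = v f * v g)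
    (htri : ∀ f g : R, v (f + g) ≤ v f + v g) (hker : ∀ f : R, f ∈ P ↔ v f = 0) (f : R) :
    liftQuotient v P hmul htri hker (Ideal.Quotient.mk P f) = v f := rfl

end Quotient

section FractionRing

variable {R K S : Type*} [CommRing R] [IsDomain R] [Field K] [Algebra R K] [IsFractionRing R K]

section PartialOrder

variable [Semifield S] [PartialOrder S] (abv : AbsoluteValue R S)

noncomputable def toFractionRingHom : K →*₀ S :=
  (IsLocalization.toLocalizationMap R⁰ K).lift₀ abv.toMonoidWithZeroHom
    fun y ↦ (abv.ne_zero (nonZeroDivisors.ne_zero y.2)).isUnit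

theorem toFractionRingHom_algebraMap (a : R) :
    abv.toFractionRingHom (algebraMap R K a) = abv a :=
  (IsLocalization.toLocalizationMap R⁰ K).lift_eq _ a

theorem toFractionRingHom_div (a b : R) :
    abv.toFractionRingHom (algebraMap R K a / algebraMap R K b) = abv a / abv b := by
  rw [map_div₀, toFractionRingHom_algebraMap, toFractionRingHom_algebraMap]

theorem eq_toFractionRingHom {w : K → S} (hmul : ∀ x y, w (x * y) = w x * w y)
    (halg : ∀ a, w (algebraMap R K a) = abv a) : w = abv.toFractionRingHom := by
  funext x
  obtain ⟨a, b, hb, rfl⟩ := IsFractionRing.div_surjective (A := R) x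
  have hb' : algebraMap R K b ≠ 0 := IsFractionRing.to_map_ne_zero_of_mem_nonZeroDivisors hb
  rw [toFractionRingHom_div, eq_div_iff (abv.ne_zero (nonZeroDivisors.ne_zero hb)), ← halg, ← halg,
    ← hmul, div_mul_cancel₀ _ hb']

end PartialOrder

variable [Semifield S] [LinearOrder S] [IsStrictOrderedRing S] (abv : AbsoluteValue R S)

variable (K) in
noncomputable def extendToFractionRing : AbsoluteValue K S where
  toFun := abv.toFractionRingHom
  map_mul' := map_mul _
  nonneg' x := by
    obtain ⟨a, b, -, rfl⟩ := IsFractionRing.div_surjective (A := R) x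
    rw [toFractionRingHom_div]
    exact div_nonneg (abv.nonneg a) (abv.nonneg b)
  eq_zero' _ := map_eq_zero _
  add_le' x y := by
    obtain ⟨a, b, hb, rfl⟩ := IsFractionRing.div_surjective (A := R) x
    obtain ⟨c, d, hd, rfl⟩ := IsFractionRing.div_surjective (A := R) y
    have hb₀ : b ≠ 0 := nonZeroDivisors.ne_zero hb
    have hd₀ : d ≠ 0 := nonZeroDivisors.ne_zero hd
    rw [div_add_div _ _ (IsFractionRing.to_map_ne_zero_of_mem_nonZeroDivisors hb)
      (IsFractionRing.to_map_ne_zero_of_mem_nonZeroDivisors hd), ← map_mul, ← map_mul, ← map_mul,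
      ← map_add, toFractionRingHom_div, toFractionRingHom_div, toFractionRingHom_div,
      div_add_div _ _ (abv.ne_zero hb₀) (abv.ne_zero hd₀), map_mul abv b d]
    gcongr
    calc abv (a * d + b * c) ≤ abv (a * d) + abv (b * c) := abv.add_le _ _
      _ = abv a * abv d + abv b * abv c := by rw [map_mul, map_mul]

theorem extendToFractionRing_algebraMap (a : R) :
    abv.extendToFractionRing K (algebraMap R K a) = abv a :=
  abv.toFractionRingHom_algebraMap a

end FractionRing

end AbsoluteValue

theorem stmt11_general {A : Type*} [CommRing A]
    (v : A → NNReal)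
    (hmul : ∀ f g : A, v (f * g) = v f * v g)
    (htri : ∀ f g : A, v (f + g) ≤ v f + v g)
    (P : Ideal A) (hP : P.IsPrime)
    (hker : ∀ f : A, f ∈ P ↔ v f = 0) :
    ∃! w : FractionRing (A ⧸ P) → NNReal,
      (∀ x, w x = 0 ↔ x = 0) ∧
      (∀ x y, w (x * y) = w x * w y) ∧
      (∀ x y, w (x + y) ≤ w x + w y) ∧
      (∀ f : A, w (algebraMap (A ⧸ P) (FractionRing (A ⧸ P)) (Ideal.Quotient.mk P f)) = v f) := by
  let abv := AbsoluteValue.liftQuotient v P hmul htri hker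
  have hpull := AbsoluteValue.liftQuotient_mk v P hmul htri hker
  refine ⟨abv.extendToFractionRing _, ⟨fun _ ↦ AbsoluteValue.eq_zero _, AbsoluteValue.map_mul _,
    AbsoluteValue.add_le _, fun f ↦ by rw [abv.extendToFractionRing_algebraMap, hpull]⟩, ?_⟩
  rintro w ⟨-, hwmul, -, hwpull⟩
  exact abv.eq_toFractionRingHom hwmul <|
    Ideal.Quotient.mk_surjective.forall.2 fun f ↦ (hwpull f).trans (hpull f).symm

theorem stmt11 {A : Type*} [CommRing A]
    (v : A → NNReal)
    (h0 : v 0 = 0) (h1 : v 1 = 1)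
    (hmul : ∀ f g : A, v (f * g) = v f * v g)
    (htri : ∀ f g : A, v (f + g) ≤ v f + v g)
    (P : Ideal A) (hP : P.IsPrime)
    (hker : ∀ f : A, f ∈ P ↔ v f = 0) :
    ∃! w : FractionRing (A ⧸ P) → NNReal,
      (∀ x, w x = 0 ↔ x = 0) ∧
      (∀ x y, w (x * y) = w x * w y) ∧
      (∀ x y, w (x + y) ≤ w x + w y) ∧
      (∀ f : A, w (algebraMap (A ⧸ P) (FractionRing (A ⧸ P)) (Ideal.Quotient.mk P f)) = v f) :=
  stmt11_general v hmul htri P hP hker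
end

section
/- Let K be a field with the trivial norm, and let x be a multiplicative seminorm on K[y] extending it with |y|_x ≤ 1 and |·|_x not identically 1 on nonzero polynomials. Then |f|_x ≤ 1 for all f ∈ K[y], and the set {f ∈ K[y] : |f|_x < 1} is a nonzero prime ideal of K[y]. -/
/-!
The hypotheses say that `v` is a valuation on `K[X]`. It is at most `1` on constants and on `X`,
hence on every polynomial by the ultrametric inequality. Once `v ≤ 1`, the elements of value `< 1`
form an ideal, and it is prime because a product of two elements of value `1` has value `1`; a
nonzero polynomial of value `≠ 1` lies in it.
-/

namespace Valuation

variable {R Γ₀ : Type*} [CommRing R] [LinearOrderedCommGroupWithZero Γ₀] (v : Valuation R Γ₀)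

def ltOneIdeal (hle : ∀ x, v x ≤ 1) : Ideal R where
  carrier := {x | v x < 1}
  zero_mem' := by simp
  add_mem' ha hb := (v.map_add _ _).trans_lt (max_lt ha hb)
  smul_mem' a x hx := by
    simpa only [smul_eq_mul, Set.mem_ofPred_eq, map_mul]
      using Right.mul_lt_one_of_le_of_lt (hle a) hx

variable {v}

theorem mem_ltOneIdeal (hle : ∀ x, v x ≤ 1) {x : R} : x ∈ v.ltOneIdeal hle ↔ v x < 1 :=
  Iff.rfl

theorem isPrime_ltOneIdeal (hle : ∀ x, v x ≤ 1) : (v.ltOneIdeal hle).IsPrime where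
  ne_top' := (Ideal.ne_top_iff_one _).2 <| by simp [mem_ltOneIdeal]
  mem_or_mem' {a b} hab := by
    simp only [mem_ltOneIdeal, map_mul] at hab ⊢
    by_contra! h
    have ha : v a = 1 := (hle a).antisymm h.1
    have hb : v b = 1 := (hle b).antisymm h.2
    simp [ha, hb] at hab

end Valuation

namespace Polynomial

variable {R Γ₀ : Type*} [CommRing R] [LinearOrderedCommGroupWithZero Γ₀]

theorem valuation_le_one_of_C_le_one_of_X_le_one (v : Valuation R[X] Γ₀)
    (hC : ∀ a, v (C a) ≤ 1) (hX : v X ≤ 1) (p : R[X]) : v p ≤ 1 := by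
  induction p using Polynomial.induction_on' with
  | add p q hp hq => exact (v.map_add p q).trans (max_le hp hq)
  | monomial n a =>
    rw [← C_mul_X_pow_eq_monomial, map_mul, map_pow]
    exact mul_le_one' (hC a) (pow_le_one' hX n)

end Polynomial

theorem stmt13 {K : Type*} [Field K] (v : Polynomial K → NNReal)
    (h0 : v 0 = 0)
    (htriv : ∀ c : K, c ≠ 0 → v (Polynomial.C c) = 1)
    (hmul : ∀ f g : Polynomial K, v (f * g) = v f * v g)
    (hultra : ∀ f g : Polynomial K, v (f + g) ≤ max (v f) (v g))
    (hX : v Polynomial.X ≤ 1)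
    (hnottriv : ∃ f : Polynomial K, f ≠ 0 ∧ v f ≠ 1) :
    (∀ f : Polynomial K, v f ≤ 1) ∧
    ∃ P : Ideal (Polynomial K), P.IsPrime ∧ P ≠ ⊥ ∧
      ∀ f : Polynomial K, f ∈ P ↔ v f < 1 := by
  let w : Valuation (Polynomial K) NNReal :=
    { toFun := v
      map_zero' := h0
      map_one' := by simpa using htriv 1 one_ne_zero
      map_mul' := hmul
      map_add_le_max' := hultra }
  have hC (c : K) : w (Polynomial.C c) ≤ 1 := by
    rcases eq_or_ne c 0 with rfl | hc
    · simp
    · exact (htriv c hc).le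
  have hle : ∀ f, w f ≤ 1 := Polynomial.valuation_le_one_of_C_le_one_of_X_le_one w hC hX
  obtain ⟨g, hg0, hg1⟩ := hnottriv
  refine ⟨hle, w.ltOneIdeal hle, Valuation.isPrime_ltOneIdeal hle, ?_,
    fun _ => Valuation.mem_ltOneIdeal hle⟩
  exact (Submodule.ne_bot_iff _).2 ⟨g, (hle g).lt_of_ne hg1, hg0⟩
end

section
/- If 𝔪 is a maximal ideal of a finitely generated algebra A over a complete nonarchimedean field K, then there is exactly one multiplicative seminorm on A extending the norm on K whose kernel is 𝔪. (The residue field A/𝔪 is a finite extension of K, and the norm on a complete field extends uniquely to any algebraic extension.) -/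
/-! By Zariski's lemma the residue field `A ⧸ m` is a finite extension of `K`, and the
multiplicative seminorms on `A` with kernel `m` are exactly the absolute values on `A ⧸ m` pulled
back along the quotient map. If the norm of `K` is nontrivial, the spectral norm is the unique
absolute value on `A ⧸ m` extending it. If it is trivial, an extension `f` is at most `1` on `K`,
so an integral `y` of degree `n` satisfies `f y ^ n ≤ ∑ i < n, f y ^ i`, which forces `f y < 2`;
applied to all powers of `y` this gives `f y ≤ 1`, hence the extension is trivial as well. -/

open Polynomial Finset

theorem lt_two_of_pow_le_geom_sum {t : ℝ} {n : ℕ} (ht : 0 ≤ t)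
    (h : t ^ n ≤ ∑ i ∈ range n, t ^ i) : t < 2 := by
  by_contra! ht2
  have hgeom := geom_sum_mul t n
  have hpos : 0 < t ^ n := by positivity
  nlinarith

namespace AbsoluteValue

variable {R L : Type*} [CommRing R] [Field L] [Algebra R L] (f : AbsoluteValue L ℝ)

theorem lt_two_of_isIntegral (hf : ∀ r : R, f (algebraMap R L r) ≤ 1) {y : L}
    (hy : IsIntegral R y) : f y < 2 := by
  obtain ⟨p, hp, hpy⟩ := hy
  have hroot :
      y ^ p.natDegree = -∑ i ∈ range p.natDegree, algebraMap R L (p.coeff i) * y ^ i := by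
    rw [hp.as_sum] at hpy
    simpa [eval₂_add, eval₂_finsetSum, eq_neg_iff_add_eq_zero] using hpy
  refine lt_two_of_pow_le_geom_sum (n := p.natDegree) (f.nonneg y) ?_
  calc f y ^ p.natDegree
        = f (∑ i ∈ range p.natDegree, algebraMap R L (p.coeff i) * y ^ i) := by
        rw [← map_pow, hroot, f.map_neg]
    _ ≤ ∑ i ∈ range p.natDegree, f (algebraMap R L (p.coeff i) * y ^ i) := f.sum_le _ _
    _ ≤ ∑ i ∈ range p.natDegree, f y ^ i := by
        gcongr with i
        rw [map_mul, map_pow]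
        exact mul_le_of_le_one_left (by positivity) (hf _)

theorem le_one_of_isIntegral (hf : ∀ r : R, f (algebraMap R L r) ≤ 1) {y : L}
    (hy : IsIntegral R y) : f y ≤ 1 := by
  by_contra! hy1
  obtain ⟨n, hn⟩ := pow_unbounded_of_one_lt 2 hy1
  have := f.lt_two_of_isIntegral hf (hy.pow n)
  rw [map_pow] at this
  linarith

theorem apply_eq_one_of_isIntegral [Algebra.IsIntegral R L]
    (hf : ∀ r : R, f (algebraMap R L r) ≤ 1) {y : L} (hy : y ≠ 0) : f y = 1 := by
  have hle := f.le_one_of_isIntegral hf (Algebra.IsIntegral.isIntegral y)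
  have hinv_le := f.le_one_of_isIntegral hf (Algebra.IsIntegral.isIntegral y⁻¹)
  have hmul : f y * f y⁻¹ = 1 := by rw [← map_mul, mul_inv_cancel₀ hy, map_one]
  nlinarith [mul_le_mul_of_nonneg_left hinv_le (f.nonneg y)]

end AbsoluteValue

theorem NormedField.norm_eq_one_of_forall_norm_le_one {K : Type*} [NormedField K]
    (h : ∀ c : K, ‖c‖ ≤ 1) {c : K} (hc : c ≠ 0) : ‖c‖ = 1 := by
  have hmul : ‖c‖ * ‖c⁻¹‖ = 1 := by rw [← norm_mul, mul_inv_cancel₀ hc, norm_one]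
  nlinarith [h c, h c⁻¹, norm_nonneg c]

theorem AbsoluteValue.existsUnique_extends_norm (K L : Type*) [NormedField K] [CompleteSpace K]
    [IsUltrametricDist K] [Field L] [Algebra K L] [Algebra.IsAlgebraic K L] :
    ∃! f : AbsoluteValue L ℝ, ∀ c : K, f (algebraMap K L c) = ‖c‖ := by
  classical
  by_cases htriv : ∀ c : K, ‖c‖ ≤ 1
  · refine ⟨AbsoluteValue.trivial, fun c => ?_, fun g hg => ?_⟩
    · rcases eq_or_ne c 0 with rfl | hc
      · simp
      · rw [AbsoluteValue.trivial_apply (by simpa using hc),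
          NormedField.norm_eq_one_of_forall_norm_le_one htriv hc]
    · have hg1 : ∀ c : K, g (algebraMap K L c) ≤ 1 := fun c => (hg c).trans_le (htriv c)
      ext y
      rcases eq_or_ne y 0 with rfl | hy
      · simp
      · rw [g.apply_eq_one_of_isIntegral hg1 hy, AbsoluteValue.trivial_apply hy]
  · push Not at htriv
    let _ : NontriviallyNormedField K := { ‹NormedField K› with non_trivial := htriv }
    refine ⟨MulRingNorm.mulRingNormEquivAbsoluteValue (spectralMulAlgNorm K L).toMulRingNorm,
      spectralNorm_extends, fun g hg => ?_⟩
    ext y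
    exact spectralNorm_unique_field_norm_ext hg y

namespace Ideal.Quotient

variable {A : Type*} [CommRing A] {m : Ideal A} {v : A → ℝ}

theorem apply_eq_of_mk_eq_mk (hadd : ∀ a b : A, v (a + b) ≤ v a + v b)
    (hker : ∀ a : A, v a = 0 ↔ a ∈ m) {a b : A} (hab : mk m a = mk m b) : v a = v b := by
  have hle : ∀ {a b : A}, a - b ∈ m → v a ≤ v b := fun {a b} h => by
    simpa [(hker _).mpr h] using hadd b (a - b)
  have hab' := Quotient.eq.mp hab
  exact le_antisymm (hle hab') (hle (by simpa using m.neg_mem hab'))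

theorem exists_absoluteValue_comp_mk_eq (hadd : ∀ a b : A, v (a + b) ≤ v a + v b)
    (hker : ∀ a : A, v a = 0 ↔ a ∈ m) (hnonneg : ∀ a : A, 0 ≤ v a)
    (hmul : ∀ a b : A, v (a * b) = v a * v b) :
    ∃ f : AbsoluteValue (A ⧸ m) ℝ, ∀ a : A, f (mk m a) = v a := by
  have hcongr {a b : A} (hab : mk m a = mk m b) : v a = v b :=
    apply_eq_of_mk_eq_mk hadd hker hab
  let f : AbsoluteValue (A ⧸ m) ℝ :=
    { toFun y := v y.out
      map_mul' x y := by rw [← hmul]; exact hcongr (by simp)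
      nonneg' y := hnonneg _
      eq_zero' y := by rw [hker, ← eq_zero_iff_mem, mk_out]
      add_le' x y := by rw [hcongr (b := x.out + y.out) (by simp)]; exact hadd _ _ }
  exact ⟨f, fun a => hcongr (mk_out _)⟩

end Ideal.Quotient

theorem stmt18 {K A : Type*} [NormedField K] [CompleteSpace K] [IsUltrametricDist K]
    [CommRing A] [Algebra K A] (hFT : Algebra.FiniteType K A)
    (m : Ideal A) (hm : m.IsMaximal) :
    ∃! v : A → ℝ,
      (∀ f : A, 0 ≤ v f) ∧
      (∀ f g : A, v (f * g) = v f * v g) ∧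
      (∀ f g : A, v (f + g) ≤ v f + v g) ∧
      (∀ c : K, v (algebraMap K A c) = ‖c‖) ∧
      (∀ f : A, v f = 0 ↔ f ∈ m) := by
  let _ := Ideal.Quotient.field m
  have : Module.Finite K (A ⧸ m) := finite_of_finite_type_of_isJacobsonRing K (A ⧸ m)
  obtain ⟨f, hf, huniq⟩ := AbsoluteValue.existsUnique_extends_norm K (A ⧸ m)
  refine ⟨fun a => f (Ideal.Quotient.mk m a), ⟨fun a => f.nonneg _, fun a b => by simp,
    fun a b => by simpa using f.add_le _ _, fun c => hf c,
    fun a => by simp [Ideal.Quotient.eq_zero_iff_mem]⟩, ?_⟩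
  rintro v ⟨hnonneg, hmul, hadd, hext, hker⟩
  obtain ⟨g, hg⟩ := Ideal.Quotient.exists_absoluteValue_comp_mk_eq hadd hker hnonneg hmul
  have hgf : g = f := huniq g fun c => by
    rw [← Ideal.Quotient.mk_algebraMap, hg, hext]
  funext a
  rw [← hg, hgf]
end

section
/- Let K be an ultrametric normed field and x a multiplicative seminorm on K[y] extending the norm on K such that |f|_x ≤ 1 for all f in a generating set of K[y] as a K-algebra (e.g., |y|_x ≤ 1), with the norm on K bounded by 1 on the ring of integers. Then the set U = {x ∈ (𝔸¹)^an : |y|_x ≤ 1} is a closed subset of (𝔸¹)^an, and it is compact. -/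
/-!
Every point `x` of the unit disc satisfies `x f ≤ ∑ᵢ ‖aᵢ‖₊` for `f = ∑ᵢ aᵢ Xⁱ`, by subadditivity and
`x (Xⁱ) = (x X)ⁱ ≤ 1`. The conditions cutting out the disc inside `K[X] → ℝ≥0` are pointwise
equalities and inequalities, hence closed, so by Tychonoff the disc is a closed subset of the
compact box `∏_f [0, ∑ᵢ ‖aᵢ‖₊]`.
-/

open Polynomial NNReal

section

variable (R : Type*) [SeminormedRing R]

/-- The analytic affine line `(𝔸¹)^an` over `R`, as a subspace of the product `R[X] → ℝ≥0`. -/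
def mulSeminormsExtending : Set (R[X] → ℝ≥0) :=
  {x | (∀ f g : R[X], x (f * g) = x f * x g) ∧ (∀ f g : R[X], x (f + g) ≤ x f + x g) ∧
    ∀ c : R, x (C c) = ‖c‖₊}

theorem isClosed_mulSeminormsExtending : IsClosed (mulSeminormsExtending R) := by
  simp only [mulSeminormsExtending, Set.ofPred_and, Set.ofPred_forall]
  refine .inter (isClosed_iInter fun f => isClosed_iInter fun g => ?_)
    (.inter (isClosed_iInter fun f => isClosed_iInter fun g => ?_)
      (isClosed_iInter fun c => ?_))
  · exact isClosed_eq (continuous_apply _) ((continuous_apply f).mul (continuous_apply g))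
  · exact isClosed_le (continuous_apply _) ((continuous_apply f).add (continuous_apply g))
  · exact isClosed_eq (continuous_apply _) continuous_const

variable {R} [NormOneClass R]

theorem apply_X_pow_le_one {x : R[X] → ℝ≥0} (hx : x ∈ mulSeminormsExtending R)
    (hX : x X ≤ 1) (n : ℕ) : x (X ^ n) ≤ 1 := by
  induction n with
  | zero => simpa using (hx.2.2 1).le
  | succ n ih => rw [pow_succ, hx.1]; exact mul_le_one' ih hX

theorem apply_le_sum_nnnorm_coeff {x : R[X] → ℝ≥0} (hx : x ∈ mulSeminormsExtending R)
    (hX : x X ≤ 1) (f : R[X]) : x f ≤ ∑ i ∈ f.support, ‖f.coeff i‖₊ := by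
  obtain ⟨hmul, hadd, hC⟩ := hx
  calc x f = x (∑ i ∈ f.support, C (f.coeff i) * X ^ i) := by
        rw [← as_sum_support_C_mul_X_pow]
    _ ≤ ∑ i ∈ f.support, x (C (f.coeff i) * X ^ i) :=
        Finset.le_sum_of_subadditive x (by simpa using (hC 0).le) hadd _ _
    _ ≤ ∑ i ∈ f.support, ‖f.coeff i‖₊ := by
        refine Finset.sum_le_sum fun i _ => ?_
        rw [hmul, hC]
        exact mul_le_of_le_one_right' (apply_X_pow_le_one ⟨hmul, hadd, hC⟩ hX i)

theorem isCompact_mulSeminormsExtending_inter_unitDisc :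
    IsCompact (mulSeminormsExtending R ∩ {x | x X ≤ 1}) := by
  refine (isCompact_Icc (a := 0) (b := fun f : R[X] => ∑ i ∈ f.support, ‖f.coeff i‖₊))
    |>.of_isClosed_subset ((isClosed_mulSeminormsExtending R).inter
      (isClosed_le (continuous_apply _) continuous_const)) ?_
  rintro x ⟨hx, hX⟩
  exact ⟨zero_le, apply_le_sum_nnnorm_coeff hx hX⟩

end

theorem stmt19_general {K : Type*} [NormedField K] :
    IsClosed {x : {x : Polynomial K → NNReal //
        (∀ f g : Polynomial K, x (f * g) = x f * x g) ∧
        (∀ f g : Polynomial K, x (f + g) ≤ x f + x g) ∧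
        (∀ c : K, x (Polynomial.C c) = ‖c‖₊)} | x.1 Polynomial.X ≤ 1} ∧
    IsCompact {x : {x : Polynomial K → NNReal //
        (∀ f g : Polynomial K, x (f * g) = x f * x g) ∧
        (∀ f g : Polynomial K, x (f + g) ≤ x f + x g) ∧
        (∀ c : K, x (Polynomial.C c) = ‖c‖₊)} | x.1 Polynomial.X ≤ 1} :=
  ⟨isClosed_le ((continuous_apply X).comp continuous_subtype_val) continuous_const,
    Subtype.isCompact_iff.2 <|
      (Subtype.image_preimage_coe (mulSeminormsExtending K) {x | x X ≤ 1}).symm ▸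
        isCompact_mulSeminormsExtending_inter_unitDisc⟩

theorem stmt19 {K : Type*} [NormedField K] [IsUltrametricDist K] :
    IsClosed {x : {x : Polynomial K → NNReal //
        (∀ f g : Polynomial K, x (f * g) = x f * x g) ∧
        (∀ f g : Polynomial K, x (f + g) ≤ x f + x g) ∧
        (∀ c : K, x (Polynomial.C c) = ‖c‖₊)} | x.1 Polynomial.X ≤ 1} ∧
    IsCompact {x : {x : Polynomial K → NNReal //
        (∀ f g : Polynomial K, x (f * g) = x f * x g) ∧
        (∀ f g : Polynomial K, x (f + g) ≤ x f + x g) ∧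
        (∀ c : K, x (Polynomial.C c) = ‖c‖₊)} | x.1 Polynomial.X ≤ 1} :=
  stmt19_general
end
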